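/- (Stability of the elementary subdivision scheme for dense sequences.) Let p ≥ 1 and δ > 0. Let μ, ν, μ', ν' ∈ P_p(ℝ^d) with W_p(μ, ν) ≤ δ and W_p(μ', ν') ≤ δ. Let γ ∈ Π(μ, ν) and γ' ∈ Π(μ', ν') be couplings attaining the respective infima defining W_p(μ,ν)^p and W_p(μ',ν')^p, and set m = (π^{1/2})_#γ and m' = (π^{1/2})_#γ'. Then W_p(m, m') ≤ δ + W_p(μ, μ'). -/

import Mathlib

open MeasureTheory ENNReal NNReal ProbabilityTheory

noncomputable section

variable {E : Type*} [NormedAddCommGroup E] [MeasurableSpace E]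

/-- The set Π(μ,ν) of couplings of `μ` and `ν`: measures on the product whose
first marginal is `μ` and second marginal is `ν`. -/
def couplings (μ ν : Measure E) : Set (Measure (E × E)) :=
  {γ | γ.map Prod.fst = μ ∧ γ.map Prod.snd = ν}

/-- The Kantorovich transport cost `∫ ‖x - y‖^p dγ(x,y)`. -/
def transportCost (p : ℝ) (γ : Measure (E × E)) : ℝ≥0∞ :=
  ∫⁻ z, (‖z.1 - z.2‖₊ : ℝ≥0∞) ^ p ∂γ

/-- `W_p(μ,ν)^p = inf_{γ ∈ Π(μ,ν)} ∫ ‖x-y‖^p dγ`. -/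
def wassersteinPow (p : ℝ) (μ ν : Measure E) : ℝ≥0∞ :=
  ⨅ γ ∈ couplings μ ν, transportCost p γ

/-- The `p`-Wasserstein distance `W_p(μ,ν)`. -/
def wasserstein (p : ℝ) (μ ν : Measure E) : ℝ≥0∞ :=
  wassersteinPow p μ ν ^ (1 / p)

/-- Membership in the Wasserstein space `P_p`: a Borel probability measure with
finite `p`-th moment. -/
def MemPp (p : ℝ) (μ : Measure E) : Prop :=
  IsProbabilityMeasure μ ∧ ∫⁻ x, (‖x‖₊ : ℝ≥0∞) ^ p ∂μ < ∞


/-!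
Glue `γ` and `γ'` along an arbitrary coupling `η` of `μ` and `μ'`: disintegrating `γ` and `γ'`
over their first marginals gives a law of `((x, y), (x', y'))` with `(x, y) ∼ γ`,
`(x', y') ∼ γ'` and `(x, x') ∼ η`. The pair of midpoints is then a coupling of `m` and `m'`, and
`½(x + y) - ½(x' + y') = (x - x') - ½((x - y) - (x' - y'))`, so Minkowski's inequality in `Lᵖ`
bounds its cost by `‖x - x'‖_p + ½ (W_p(μ, ν) + W_p(μ', ν'))`; take the infimum over `η`.
-/

namespace ProbabilityTheory.Kernel

variable {α β γ δ ε ζ : Type*} [MeasurableSpace α] [MeasurableSpace β] [MeasurableSpace γ]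
  [MeasurableSpace δ] [MeasurableSpace ε] [MeasurableSpace ζ]

lemma map_fst_parallelComp (κ : Kernel α β) [IsSFiniteKernel κ] (η : Kernel γ δ)
    [IsMarkovKernel η] : (κ ∥ₖ η).map Prod.fst = κ.comap Prod.fst measurable_fst := by
  ext x : 1
  rw [map_apply _ measurable_fst, parallelComp_apply, comap_apply]
  exact MeasureTheory.Measure.fst_prod

lemma map_snd_parallelComp (κ : Kernel α β) [IsMarkovKernel κ] (η : Kernel γ δ)
    [IsSFiniteKernel η] : (κ ∥ₖ η).map Prod.snd = η.comap Prod.snd measurable_snd := by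
  ext x : 1
  rw [map_apply _ measurable_snd, parallelComp_apply, comap_apply]
  exact MeasureTheory.Measure.snd_prod

lemma map_prodMap_parallelComp (κ : Kernel α β) [IsSFiniteKernel κ] (η : Kernel γ δ)
    [IsSFiniteKernel η] {f : β → ε} {g : δ → ζ} (hf : Measurable f) (hg : Measurable g) :
    (κ ∥ₖ η).map (Prod.map f g) = κ.map f ∥ₖ η.map g := by
  rw [← deterministic_comp_eq_map hf, ← deterministic_comp_eq_map hg,
    ← deterministic_comp_eq_map (hf.prodMap hg), ← deterministic_parallelComp_deterministic,
    parallelComp_comp_parallelComp]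

end ProbabilityTheory.Kernel

namespace MeasureTheory.Measure

variable {α β γ δ : Type*} [MeasurableSpace α] [MeasurableSpace β] [MeasurableSpace γ]
  [MeasurableSpace δ]

lemma comap_comp_eq_comp_map (κ : Kernel α β) (ρ : Measure γ) {f : γ → α} (hf : Measurable f) :
    κ.comap f hf ∘ₘ ρ = κ ∘ₘ ρ.map f := by
  rw [← Kernel.comp_deterministic_eq_comap, ← comp_assoc, deterministic_comp_eq_map]

lemma fst_parallelComp_comp (κ : Kernel α β) [IsSFiniteKernel κ] (η : Kernel γ δ)
    [IsMarkovKernel η] (ρ : Measure (α × γ)) : ((κ ∥ₖ η) ∘ₘ ρ).fst = κ ∘ₘ ρ.fst := by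
  rw [Measure.fst, map_comp _ _ measurable_fst, Kernel.map_fst_parallelComp,
    comap_comp_eq_comp_map]
  rfl

lemma snd_parallelComp_comp (κ : Kernel α β) [IsMarkovKernel κ] (η : Kernel γ δ)
    [IsSFiniteKernel η] (ρ : Measure (α × γ)) : ((κ ∥ₖ η) ∘ₘ ρ).snd = η ∘ₘ ρ.snd := by
  rw [Measure.snd, map_comp _ _ measurable_snd, Kernel.map_snd_parallelComp,
    comap_comp_eq_comp_map]
  rfl

theorem exists_gluing {α' β' : Type*} [MeasurableSpace α'] [MeasurableSpace β']
    [StandardBorelSpace β] [Nonempty β] [StandardBorelSpace β'] [Nonempty β']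
    (ρ : Measure (α × β)) [IsFiniteMeasure ρ] (ρ' : Measure (α' × β')) [IsFiniteMeasure ρ']
    (η : Measure (α × α')) (hη₁ : η.fst = ρ.fst) (hη₂ : η.snd = ρ'.fst) :
    ∃ θ : Measure ((α × β) × (α' × β')),
      θ.fst = ρ ∧ θ.snd = ρ' ∧ θ.map (fun z ↦ (z.1.1, z.2.1)) = η := by
  refine ⟨((Kernel.id ×ₖ ρ.condKernel) ∥ₖ (Kernel.id ×ₖ ρ'.condKernel)) ∘ₘ η, ?_, ?_, ?_⟩
  · rw [fst_parallelComp_comp, hη₁, ← compProd_eq_comp_prod, disintegrate]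
  · rw [snd_parallelComp_comp, hη₂, ← compProd_eq_comp_prod, disintegrate]
  · rw [show (fun z : (α × β) × (α' × β') ↦ (z.1.1, z.2.1)) = Prod.map Prod.fst Prod.fst from rfl,
      map_comp _ _ (measurable_fst.prodMap measurable_fst),
      Kernel.map_prodMap_parallelComp _ _ measurable_fst measurable_fst,
      ← Kernel.fst_eq, ← Kernel.fst_eq, Kernel.fst_prod, Kernel.fst_prod,
      Kernel.id_parallelComp_id, id_comp]

end MeasureTheory.Measure

section Couplings

variable {α β : Type*} [MeasurableSpace α] [MeasurableSpace β]

lemma isFiniteMeasure_of_mem_couplings {μ ν : Measure α} [IsFiniteMeasure μ]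
    {γ : Measure (α × α)} (hγ : γ ∈ couplings μ ν) : IsFiniteMeasure γ := by
  have : IsFiniteMeasure (γ.map Prod.fst) := hγ.1 ▸ ‹_›
  exact Measure.isFiniteMeasure_of_map measurable_fst.aemeasurable

lemma map_prodMap_mem_couplings {μ ν : Measure α} {γ : Measure (α × α)} (hγ : γ ∈ couplings μ ν)
    {f : α → β} (hf : Measurable f) : γ.map (Prod.map f f) ∈ couplings (μ.map f) (ν.map f) := by
  refine ⟨?_, ?_⟩
  · rw [Measure.map_map measurable_fst (hf.prodMap hf), ← hγ.1, Measure.map_map hf measurable_fst]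
    rfl
  · rw [Measure.map_map measurable_snd (hf.prodMap hf), ← hγ.2, Measure.map_map hf measurable_snd]
    rfl

end Couplings

section Wasserstein

variable {p : ℝ}

lemma transportCost_rpow_eq_eLpNorm (hp : 0 < p) (γ : Measure (E × E)) :
    transportCost p γ ^ (1 / p) = eLpNorm (fun z ↦ z.1 - z.2) (ENNReal.ofReal p) γ := by
  rw [eLpNorm_eq_eLpNorm' (by simpa using hp) ofReal_ne_top, toReal_ofReal hp.le]
  rfl

lemma wasserstein_eq_iInf_eLpNorm (hp : 0 < p) (μ ν : Measure E) :
    wasserstein p μ ν = ⨅ γ ∈ couplings μ ν, eLpNorm (fun z ↦ z.1 - z.2) (ENNReal.ofReal p) γ := by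
  let e := ENNReal.orderIsoRpow (1 / p) (one_div_pos.2 hp)
  simp_rw [← transportCost_rpow_eq_eLpNorm hp, wasserstein, wassersteinPow]
  exact (e.map_iInf _).trans (iInf_congr fun γ ↦ e.map_iInf _)

lemma wasserstein_le_eLpNorm (hp : 0 < p) {μ ν : Measure E} {γ : Measure (E × E)}
    (hγ : γ ∈ couplings μ ν) :
    wasserstein p μ ν ≤ eLpNorm (fun z ↦ z.1 - z.2) (ENNReal.ofReal p) γ :=
  (wasserstein_eq_iInf_eLpNorm hp μ ν).trans_le (iInf₂_le γ hγ)

end Wasserstein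

section LineInterpolation

variable {Ω F : Type*} {mΩ : MeasurableSpace Ω} [NormedAddCommGroup F] [NormedSpace ℝ F]

lemma eLpNorm_interpolate_sub_le {q : ℝ≥0∞} (hq : 1 ≤ q) {θ : Measure Ω} {f g f' g' : Ω → F}
    (hf : AEStronglyMeasurable f θ) (hg : AEStronglyMeasurable g θ)
    (hf' : AEStronglyMeasurable f' θ) (hg' : AEStronglyMeasurable g' θ) (t : ℝ) :
    eLpNorm (fun ω ↦ ((1 - t) • f ω + t • g ω) - ((1 - t) • f' ω + t • g' ω)) q θ ≤
      eLpNorm (fun ω ↦ f ω - f' ω) q θ +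
        ‖t‖ₑ * (eLpNorm (fun ω ↦ f ω - g ω) q θ + eLpNorm (fun ω ↦ f' ω - g' ω) q θ) := by
  have hsplit : (fun ω ↦ ((1 - t) • f ω + t • g ω) - ((1 - t) • f' ω + t • g' ω)) =
      (f - f') - t • ((f - g) - (f' - g')) := by
    ext ω
    simp only [Pi.sub_apply, Pi.smul_apply]
    module
  calc eLpNorm (fun ω ↦ ((1 - t) • f ω + t • g ω) - ((1 - t) • f' ω + t • g' ω)) q θ
      ≤ eLpNorm (f - f') q θ + eLpNorm (t • ((f - g) - (f' - g'))) q θ := by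
        rw [hsplit]
        exact eLpNorm_sub_le (hf.sub hf') (((hf.sub hg).sub (hf'.sub hg')).const_smul t) hq
    _ ≤ eLpNorm (f - f') q θ + ‖t‖ₑ * (eLpNorm (f - g) q θ + eLpNorm (f' - g') q θ) := by
        rw [eLpNorm_const_smul]
        gcongr
        exact eLpNorm_sub_le (hf.sub hg) (hf'.sub hg') hq

end LineInterpolation

theorem wasserstein_map_interpolate_le [NormedSpace ℝ E] [CompleteSpace E]
    [SecondCountableTopology E] [BorelSpace E] {p : ℝ} (hp : 1 ≤ p) (t : ℝ) {μ ν μ' ν' : Measure E}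
    [IsFiniteMeasure μ] [IsFiniteMeasure μ'] {γ γ' : Measure (E × E)}
    (hγ : γ ∈ couplings μ ν) (hγ' : γ' ∈ couplings μ' ν') :
    wasserstein p (γ.map fun z ↦ (1 - t) • z.1 + t • z.2)
        (γ'.map fun z ↦ (1 - t) • z.1 + t • z.2) ≤
      wasserstein p μ μ' + ‖t‖ₑ * (eLpNorm (fun z ↦ z.1 - z.2) (.ofReal p) γ +
        eLpNorm (fun z ↦ z.1 - z.2) (.ofReal p) γ') := by
  have hp₀ : 0 < p := by linarith
  have hq : 1 ≤ ENNReal.ofReal p := by simpa using ENNReal.ofReal_le_ofReal hp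
  have := isFiniteMeasure_of_mem_couplings hγ
  have := isFiniteMeasure_of_mem_couplings hγ'
  set interp : E × E → E := fun z ↦ (1 - t) • z.1 + t • z.2
  have hinterp : Measurable interp := by fun_prop
  rw [wasserstein_eq_iInf_eLpNorm hp₀ μ μ', ENNReal.iInf₂_add]
  refine le_iInf₂ fun η hη ↦ ?_
  obtain ⟨θ, hθ₁, hθ₂, hθη⟩ :=
    Measure.exists_gluing γ γ' η (hη.1.trans hγ.1.symm) (hη.2.trans hγ'.1.symm)
  calc wasserstein p _ _
      ≤ eLpNorm (fun z ↦ z.1 - z.2) (.ofReal p) (θ.map (Prod.map interp interp)) :=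
        wasserstein_le_eLpNorm hp₀ (map_prodMap_mem_couplings ⟨hθ₁, hθ₂⟩ hinterp)
    _ = eLpNorm (fun z ↦ interp z.1 - interp z.2) (.ofReal p) θ :=
        eLpNorm_map_measure (by fun_prop) (by fun_prop)
    _ ≤ eLpNorm (fun z ↦ z.1.1 - z.2.1) (.ofReal p) θ +
          ‖t‖ₑ * (eLpNorm (fun z ↦ z.1.1 - z.1.2) (.ofReal p) θ +
            eLpNorm (fun z ↦ z.2.1 - z.2.2) (.ofReal p) θ) :=
        eLpNorm_interpolate_sub_le hq (by fun_prop) (by fun_prop) (by fun_prop) (by fun_prop) t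
    _ = _ := by
      rw [← hθη, ← hθ₁, ← hθ₂, Measure.fst, Measure.snd,
        eLpNorm_map_measure (by fun_prop) (by fun_prop),
        eLpNorm_map_measure (by fun_prop) (by fun_prop),
        eLpNorm_map_measure (by fun_prop) (by fun_prop)]
      rfl

theorem midpoint_stability_general {d : ℕ} (p : ℝ) (hp : 1 ≤ p) (δ : ℝ)
    (μ ν μ' ν' : Measure (EuclideanSpace ℝ (Fin d)))
    (hμ : MemPp p μ) (hμ' : MemPp p μ')
    (hμν : wasserstein p μ ν ≤ ENNReal.ofReal δ)
    (hμν' : wasserstein p μ' ν' ≤ ENNReal.ofReal δ)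
    (γ γ' : Measure (EuclideanSpace ℝ (Fin d) × EuclideanSpace ℝ (Fin d)))
    (hγ : γ ∈ couplings μ ν) (hγopt : transportCost p γ = wassersteinPow p μ ν)
    (hγ' : γ' ∈ couplings μ' ν') (hγ'opt : transportCost p γ' = wassersteinPow p μ' ν')
    (m m' : Measure (EuclideanSpace ℝ (Fin d)))
    (hm : m = γ.map (fun z => (1/2 : ℝ) • z.1 + (1/2 : ℝ) • z.2))
    (hm' : m' = γ'.map (fun z => (1/2 : ℝ) • z.1 + (1/2 : ℝ) • z.2)) :
    wasserstein p m m' ≤ ENNReal.ofReal δ + wasserstein p μ μ' := by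
  have hp₀ : 0 < p := by linarith
  have := hμ.1
  have := hμ'.1
  have hγW : eLpNorm (fun z ↦ z.1 - z.2) (.ofReal p) γ = wasserstein p μ ν := by
    rw [← transportCost_rpow_eq_eLpNorm hp₀, hγopt, wasserstein]
  have hγ'W : eLpNorm (fun z ↦ z.1 - z.2) (.ofReal p) γ' = wasserstein p μ' ν' := by
    rw [← transportCost_rpow_eq_eLpNorm hp₀, hγ'opt, wasserstein]
  have hhalf : ‖(1 / 2 : ℝ)‖ₑ = 2⁻¹ := by simp [Real.enorm_eq_ofReal_abs]
  calc wasserstein p m m'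
      ≤ wasserstein p μ μ' + ‖(1 / 2 : ℝ)‖ₑ * (wasserstein p μ ν + wasserstein p μ' ν') := by
        have h := wasserstein_map_interpolate_le hp (1 / 2) hγ hγ'
        rwa [show (1 : ℝ) - 1 / 2 = 1 / 2 by norm_num, ← hm, ← hm', hγW, hγ'W] at h
    _ ≤ wasserstein p μ μ' + 2⁻¹ * (ENNReal.ofReal δ + ENNReal.ofReal δ) := by
        rw [hhalf]
        gcongr
    _ = ENNReal.ofReal δ + wasserstein p μ μ' := by
        rw [← two_mul, ← mul_assoc, ENNReal.inv_mul_cancel two_ne_zero ofNat_ne_top, one_mul,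
          add_comm]

/-- stability of the elementary subdivision scheme for dense
sequences: the McCann midpoints satisfy `W_p(m, m') ≤ δ + W_p(μ, μ')`. -/
theorem midpoint_stability {d : ℕ} (p : ℝ) (hp : 1 ≤ p) (δ : ℝ) (hδ : 0 < δ)
    (μ ν μ' ν' : Measure (EuclideanSpace ℝ (Fin d)))
    (hμ : MemPp p μ) (hν : MemPp p ν) (hμ' : MemPp p μ') (hν' : MemPp p ν')
    (hμν : wasserstein p μ ν ≤ ENNReal.ofReal δ)
    (hμν' : wasserstein p μ' ν' ≤ ENNReal.ofReal δ)
    (γ γ' : Measure (EuclideanSpace ℝ (Fin d) × EuclideanSpace ℝ (Fin d)))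
    (hγ : γ ∈ couplings μ ν) (hγopt : transportCost p γ = wassersteinPow p μ ν)
    (hγ' : γ' ∈ couplings μ' ν') (hγ'opt : transportCost p γ' = wassersteinPow p μ' ν')
    (m m' : Measure (EuclideanSpace ℝ (Fin d)))
    (hm : m = γ.map (fun z => (1/2 : ℝ) • z.1 + (1/2 : ℝ) • z.2))
    (hm' : m' = γ'.map (fun z => (1/2 : ℝ) • z.1 + (1/2 : ℝ) • z.2)) :
    wasserstein p m m' ≤ ENNReal.ofReal δ + wasserstein p μ μ' :=
  midpoint_stability_general p hp δ μ ν μ' ν' hμ hμ' hμν hμν' γ γ' hγ hγopt hγ' hγ'opt m m' hm hm'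

end
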